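/- arXiv:1305.6099 — 2 statements merged into one kernel-verified Lean document; each statement's English description precedes it below -/
import Mathlib

section
/- Let φ(α, y, d, g₀, g₁, m) = α − d(y − g₁)/m + (1−d)(y − g₀)/(1−m) − (g₁ − g₀). If y, d, z are random variables with d ∈ {0,1}, m(z) = E[d | z] ∈ (0,1) almost surely, and g(j, z) = E[y | d = j, z], then E[φ(α₀, y, d, g(0,z), g(1,z), m(z))] = 0 where α₀ = E[g(1,z) − g(0,z)]. -/
open MeasureTheory

/-- Hahn's efficient score for the ATE. -/
noncomputable def φATE (α y d g₀ g₁ m : ℝ) : ℝ :=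
  α - d * (y - g₁) / m + (1 - d) * (y - g₀) / (1 - m) - (g₁ - g₀)

/-- key lemma: if E[X|mz]=0, c := E[w|mz] agrees a.e. with w, w strictly between
bounds making it nonzero, and X/w is integrable, then ∫ X/w = 0. -/
lemma aux_int_zero {Ω : Type*} {mz m0 : MeasurableSpace Ω}
    (hle : mz ≤ m0) (P : @Measure Ω m0) [IsProbabilityMeasure P]
    (X w : Ω → ℝ)
    (hw : P[w | mz] =ᵐ[P] w) (hwb : ∀ᵐ ω ∂P, 0 < w ω ∧ w ω < 1)
    (hX : P[X | mz] =ᵐ[P] 0)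
    (hint : Integrable (fun ω => X ω / w ω) P) :
    ∫ ω, X ω / w ω ∂P = 0 := by
  set c : Ω → ℝ := P[w | mz] with hc
  have hcsm : StronglyMeasurable[mz] c := stronglyMeasurable_condExp
  have hinv : StronglyMeasurable[mz] (fun ω => (c ω)⁻¹) :=
    (hcsm.measurable.inv).stronglyMeasurable
  -- X = w * (X / w) a.e., integrable
  have hXint : Integrable X P := by
    have h1 : Integrable (fun ω => w ω * (X ω / w ω)) P := by
      have hcw : AEStronglyMeasurable w P :=
        ((hcsm.mono hle).aestronglyMeasurable (μ := P)).congr hw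
      refine hint.bdd_mul (c := 1) hcw ?_
      · filter_upwards [hwb] with ω hω
        rw [Real.norm_eq_abs, abs_of_pos hω.1]; exact hω.2.le
    refine h1.congr ?_
    filter_upwards [hwb] with ω hω
    rw [mul_comm]; exact div_mul_cancel₀ (X ω) hω.1.ne'
  have heq : (fun ω => X ω / w ω) =ᵐ[P] (fun ω => (c ω)⁻¹) * X := by
    filter_upwards [hwb, hw] with ω hω hweq
    simp only [Pi.mul_apply, hweq, div_eq_inv_mul]
  have hint' : Integrable ((fun ω => (c ω)⁻¹) * X) P := hint.congr heq
  have hpull := condExp_mul_of_stronglyMeasurable_left hinv hint' hXint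
  calc ∫ ω, X ω / w ω ∂P = ∫ ω, ((fun ω => (c ω)⁻¹) * X) ω ∂P := integral_congr_ae heq
    _ = ∫ ω, (P[(fun ω => (c ω)⁻¹) * X | mz]) ω ∂P := (integral_condExp (μ := P) hle (f := (fun ω => (c ω)⁻¹) * X)).symm
    _ = ∫ ω, (0 : ℝ) ∂P := by
        refine integral_congr_ae (hpull.trans ?_)
        filter_upwards [hX] with ω hω
        simp [Pi.mul_apply, hω]
    _ = 0 := by simp

/-- In the ATE model with binary treatment, propensity score `m(z) = E[d|z]`
bounded away from 0 and 1, and conditional means `g(j,z) = E[y|d=j,z]`, the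
efficient moment condition holds at `α₀ = E[g(1,z) − g(0,z)]`. -/
theorem stmt_3 {Ω Z : Type*} [MeasurableSpace Ω] [MeasurableSpace Z]
    (P : Measure Ω) [IsProbabilityMeasure P]
    (y d : Ω → ℝ) (z : Ω → Z) (hz : Measurable z)
    (g₀ g₁ m : Z → ℝ)
    (mz : MeasurableSpace Ω) (hmz : mz = MeasurableSpace.comap z inferInstance)
    (hd01 : ∀ ω, d ω = 0 ∨ d ω = 1)
    (hm01 : ∀ᵐ ω ∂P, 0 < m (z ω) ∧ m (z ω) < 1)
    -- m(z) is the conditional expectation of d given z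
    (hm : P[d | mz] =ᵐ[P] fun ω => m (z ω))
    -- g(j,z) = E[y | d = j, z], characterized by conditional moment restrictions
    (hg1 : P[fun ω => d ω * (y ω - g₁ (z ω)) | mz] =ᵐ[P] 0)
    (hg0 : P[fun ω => (1 - d ω) * (y ω - g₀ (z ω)) | mz] =ᵐ[P] 0)
    -- integrability
    (hint1 : Integrable (fun ω => d ω * (y ω - g₁ (z ω)) / m (z ω)) P)
    (hint0 : Integrable (fun ω => (1 - d ω) * (y ω - g₀ (z ω)) / (1 - m (z ω))) P)
    (hintg : Integrable (fun ω => g₁ (z ω) - g₀ (z ω)) P)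
    (α₀ : ℝ) (hα₀ : α₀ = ∫ ω, (g₁ (z ω) - g₀ (z ω)) ∂P) :
    ∫ ω, φATE α₀ (y ω) (d ω) (g₀ (z ω)) (g₁ (z ω)) (m (z ω)) ∂P = 0 := by
  have hle := hmz.trans_le hz.comap_le
  -- E[m(z)|mz] = m(z) a.e.
  have hwm : P[(fun ω => m (z ω)) | mz] =ᵐ[P] (fun ω => m (z ω)) :=
    ((condExp_congr_ae hm).symm.trans (condExp_condExp_of_le le_rfl hle)).trans hm
  have hA : ∫ ω, d ω * (y ω - g₁ (z ω)) / m (z ω) ∂P = 0 :=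
    aux_int_zero hle P _ _ hwm hm01 hg1 hint1
  have hw0 : P[(fun ω => 1 - m (z ω)) | mz] =ᵐ[P] (fun ω => 1 - m (z ω)) := by
    have h1 : P[(fun _ : Ω => (1 : ℝ)) | mz] =ᵐ[P] (fun _ => (1 : ℝ)) :=
      Filter.EventuallyEq.of_eq (condExp_const hle (1 : ℝ))
    exact (condExp_sub (integrable_const 1) (integrable_condExp.congr hm) (m := mz)).trans
      (Filter.EventuallyEq.sub h1 hwm)
  have hb0 : ∀ᵐ ω ∂P, 0 < 1 - m (z ω) ∧ 1 - m (z ω) < 1 := by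
    filter_upwards [hm01] with ω hω
    constructor <;> linarith [hω.1, hω.2]
  have hB : ∫ ω, (1 - d ω) * (y ω - g₀ (z ω)) / (1 - m (z ω)) ∂P = 0 :=
    aux_int_zero hle P _ _ hw0 hb0 hg0 hint0
  have hφ : ∀ ω, φATE α₀ (y ω) (d ω) (g₀ (z ω)) (g₁ (z ω)) (m (z ω)) =
      (α₀ - d ω * (y ω - g₁ (z ω)) / m (z ω) + (1 - d ω) * (y ω - g₀ (z ω)) / (1 - m (z ω)))
      - (g₁ (z ω) - g₀ (z ω)) := fun ω => rfl
  simp only [hφ]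
  have i2 : Integrable (fun ω => α₀ - d ω * (y ω - g₁ (z ω)) / m (z ω)) P := by
    exact (integrable_const α₀).sub hint1
  have i1 : Integrable (fun ω => α₀ - d ω * (y ω - g₁ (z ω)) / m (z ω)
      + (1 - d ω) * (y ω - g₀ (z ω)) / (1 - m (z ω))) P := by exact i2.add hint0
  rw [integral_sub i1 hintg, integral_add i2 hint0, integral_sub (integrable_const α₀) hint1,
    hA, hB, integral_const, ← hα₀]
  simp
end

section
/- Suppose E[d_i] = 0, E[d_i²] = σ_d², E[d_i ζ_i] = 0, E[ζ_i²] = σ_ζ² < ∞, E[d_i x_i] = ρ σ_x σ_d with data i.i.d. Then the scaled omitted-variable-bias term ii = σ_n^{*−1} (𝔼_n[d_i²])^{−1} √n 𝔼_n[d_i x_i] β_g, with σ_n^{*} = σ_ζ/σ_d, satisfies: if |β_g| = (ℓ_n/√n)·σ_ζ/(σ_x √(1−ρ²)) with ℓ_n|ρ| → ∞, then |ii| → ∞ in probability; specifically, with probability tending to one, |ii| ≥ (1/2)·|ρ|/√(1−ρ²)·ℓ_n. -/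
open MeasureTheory Filter

/-- Divergence of the scaled omitted-variable-bias term: if
`|β_g| = (ℓ_n/√n)·σ_ζ/(σ_x √(1−ρ²))` with `ℓ_n → ∞` and `ρ ≠ 0`, then with
probability tending to one `|ii_n| ≥ (1/2)|ρ|/√(1−ρ²)·ℓ_n`, so
`|ii_n| → ∞` in probability. -/
theorem stmt_13 {Ω : Type*} [MeasurableSpace Ω] (P : Measure Ω)
    [IsProbabilityMeasure P]
    (σx σd σζ ρ : ℝ) (hσx : 0 < σx) (hσd : 0 < σd) (hσζ : 0 < σζ)
    (hρ1 : |ρ| < 1) (hρ0 : ρ ≠ 0)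
    -- sample moments  A n = 𝔼_n[d_i²],  B n = 𝔼_n[d_i x_i]
    (A B : ℕ → Ω → ℝ)
    -- law of large numbers: A n →_P σ_d²  and  B n →_P ρ σ_x σ_d
    (hA : ∀ ε : ℝ, 0 < ε →
      Tendsto (fun n => P {ω | ε ≤ |A n ω - σd ^ 2|}) atTop (nhds 0))
    (hB : ∀ ε : ℝ, 0 < ε →
      Tendsto (fun n => P {ω | ε ≤ |B n ω - ρ * σx * σd|}) atTop (nhds 0))
    (ℓ : ℕ → ℝ) (hℓ : Tendsto ℓ atTop atTop)
    (βg : ℕ → ℝ)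
    (hβg : ∀ n : ℕ, 1 ≤ n →
      |βg n| = (ℓ n / Real.sqrt n) * σζ / (σx * Real.sqrt (1 - ρ ^ 2)))
    -- the scaled omitted-variable-bias term
    (ii : ℕ → Ω → ℝ)
    (hii : ∀ n ω, ii n ω =
      (σζ / σd)⁻¹ * (A n ω)⁻¹ * Real.sqrt n * B n ω * βg n) :
    Tendsto (fun n =>
        P {ω | (1 / 2) * (|ρ| / Real.sqrt (1 - ρ ^ 2)) * ℓ n ≤ |ii n ω|})
      atTop (nhds 1) ∧
    ∀ M : ℝ, Tendsto (fun n => P {ω | M ≤ |ii n ω|}) atTop (nhds 1) := by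
  have hρa : 0 < |ρ| := abs_pos.2 hρ0
  have hρsq : 0 < 1 - ρ ^ 2 := by nlinarith [sq_abs ρ]
  set s : ℝ := Real.sqrt (1 - ρ ^ 2) with hs
  have hs0 : 0 < s := Real.sqrt_pos.2 hρsq
  set ε : ℝ := |ρ| * σx * σd ^ 2 / (2 * σd + |ρ| * σx) with hε
  have hden : 0 < 2 * σd + |ρ| * σx := by positivity
  have hε0 : 0 < ε := by positivity
  have hεeq : ε * (2 * σd + |ρ| * σx) = |ρ| * σx * σd ^ 2 := by
    rw [hε]; field_simp
  have hεA : ε < σd ^ 2 := by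
    rw [hε, div_lt_iff₀ hden]
    nlinarith [pow_pos hσd 3, mul_pos (mul_pos hρa hσx) (pow_pos hσd 2)]
  have hεB : ε < |ρ| * σx * σd := by
    rw [hε, div_lt_iff₀ hden]
    nlinarith [mul_pos (mul_pos hρa hσx) (pow_pos hσd 2),
      mul_pos (mul_pos (mul_pos hρa hρa) (mul_pos hσx hσx)) hσd]
  -- pointwise inequality on the good event
  have key : ∀ n : ℕ, 1 ≤ n → 0 ≤ ℓ n → ∀ ω : Ω,
      |A n ω - σd ^ 2| < ε → |B n ω - ρ * σx * σd| < ε →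
      (1 / 2) * (|ρ| / s) * ℓ n ≤ |ii n ω| := by
    intro n hn hln ω hAω hBω
    set a := A n ω
    set b := B n ω
    have haL : σd ^ 2 - ε < a := by
      have := abs_lt.1 hAω; linarith [this.1]
    have haU : a < σd ^ 2 + ε := by
      have := abs_lt.1 hAω; linarith [this.2]
    have ha0 : 0 < a := by nlinarith
    have hbL : |ρ| * σx * σd - ε ≤ |b| := by
      have h1 : |ρ * σx * σd| - |b - ρ * σx * σd| ≤ |b| := by
        have := abs_sub_abs_le_abs_sub (ρ * σx * σd) b
        rw [abs_sub_comm] at this; linarith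
      have h2 : |ρ * σx * σd| = |ρ| * σx * σd := by
        rw [abs_mul, abs_mul, abs_of_pos hσx, abs_of_pos hσd]
      linarith [h1, hBω.le, h2 ▸ h1]
    have hn0 : (0:ℝ) < Real.sqrt n := Real.sqrt_pos.2 (by exact_mod_cast hn)
    have hiiabs : |ii n ω| = σd * |b| * ℓ n / (a * σx * s) := by
      have hb : |βg n| = ℓ n / Real.sqrt n * σζ / (σx * s) := hβg n hn
      rw [hii n ω, abs_mul, abs_mul, abs_mul, abs_mul, hb,
        abs_of_pos (show (0:ℝ) < (σζ / σd)⁻¹ by positivity),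
        abs_of_pos (inv_pos.2 ha0),
        abs_of_nonneg (Real.sqrt_nonneg (n:ℝ))]
      field_simp
      ring
    rw [hiiabs, show (1:ℝ) / 2 * (|ρ| / s) * ℓ n = |ρ| * ℓ n / (2 * s) by ring,
      div_le_div_iff₀ (by positivity) (by positivity)]
    have hmain : |ρ| * σx * a ≤ 2 * (σd * |b|) := by nlinarith
    nlinarith [mul_le_mul_of_nonneg_right hmain (mul_nonneg hln hs0.le)]
  -- probabilistic part
  have hu : Tendsto (fun n => P {ω | ε ≤ |A n ω - σd ^ 2|}
      + P {ω | ε ≤ |B n ω - ρ * σx * σd|}) atTop (nhds 0) := by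
    have := (hA ε hε0).add (hB ε hε0)
    simpa using this
  have hlow : Tendsto (fun n => 1 - (P {ω | ε ≤ |A n ω - σd ^ 2|}
      + P {ω | ε ≤ |B n ω - ρ * σx * σd|})) atTop (nhds 1) := by
    have := ENNReal.Tendsto.sub (tendsto_const_nhds (x := (1:ENNReal))) hu
      (Or.inl (by norm_num))
    simpa using this
  have hsub : ∀ n : ℕ, 1 ≤ n → 0 ≤ ℓ n →
      (1 : ENNReal) - (P {ω | ε ≤ |A n ω - σd ^ 2|}
        + P {ω | ε ≤ |B n ω - ρ * σx * σd|})
      ≤ P {ω | (1 / 2) * (|ρ| / s) * ℓ n ≤ |ii n ω|} := by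
    intro n hn hln
    set T : Set Ω := {ω | (1 / 2) * (|ρ| / s) * ℓ n ≤ |ii n ω|}
    have hTc : Tᶜ ⊆ {ω | ε ≤ |A n ω - σd ^ 2|}
        ∪ {ω | ε ≤ |B n ω - ρ * σx * σd|} := by
      intro ω hω
      by_contra hc
      simp only [Set.mem_union, Set.mem_setOf_eq, not_or, not_le] at hc
      exact hω (key n hn hln ω hc.1 hc.2)
    have h1 : (1 : ENNReal) ≤ P T + P Tᶜ := by
      have : P Set.univ ≤ P (T ∪ Tᶜ) := by
        rw [Set.union_compl_self]
      calc (1 : ENNReal) = P Set.univ := (measure_univ).symm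
        _ = P (T ∪ Tᶜ) := by rw [Set.union_compl_self]
        _ ≤ P T + P Tᶜ := measure_union_le _ _
    have h2 : P Tᶜ ≤ P {ω | ε ≤ |A n ω - σd ^ 2|}
        + P {ω | ε ≤ |B n ω - ρ * σx * σd|} :=
      le_trans (measure_mono hTc) (measure_union_le _ _)
    exact tsub_le_iff_right.2 (le_trans h1 (by gcongr))
  have hev : ∀ᶠ n in atTop, (1 ≤ n ∧ 0 ≤ ℓ n) := by
    filter_upwards [eventually_ge_atTop 1, hℓ.eventually_ge_atTop 0] with n h1 h2
    exact ⟨h1, h2⟩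
  have part1 : Tendsto (fun n =>
      P {ω | (1 / 2) * (|ρ| / s) * ℓ n ≤ |ii n ω|}) atTop (nhds 1) := by
    apply tendsto_of_tendsto_of_tendsto_of_le_of_le' hlow tendsto_const_nhds
    · filter_upwards [hev] with n hn
      exact hsub n hn.1 hn.2
    · filter_upwards with n
      exact prob_le_one
  refine ⟨part1, ?_⟩
  intro M
  have hcl : Tendsto (fun n => (1 / 2) * (|ρ| / s) * ℓ n) atTop atTop := by
    exact Tendsto.const_mul_atTop (by positivity) hℓ
  apply tendsto_of_tendsto_of_tendsto_of_le_of_le' part1 tendsto_const_nhds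
  · filter_upwards [hcl.eventually_ge_atTop M] with n hn
    apply measure_mono
    intro ω hω
    exact le_trans hn hω
  · filter_upwards with n
    exact prob_le_one
end
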